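/- arXiv:1810.02752 — 3 statements merged into one kernel-verified Lean document; each statement's English description precedes it below -/
import Mathlib

section
/- Let n > α > 0 and let u : ℝⁿ \ {0} → ℝ be a positive function satisfying u(x) ≥ (λ/|x|)^{n-α} u(λ²x/|x|²) for all λ > 0 and all x with |x| ≥ λ. Then for all |x| ≥ 1, u(x) ≥ C₀ |x|^{-(n-α)/2}, where C₀ = inf_{|z|=1} u(z) (assumed positive, e.g. u continuous and positive on the unit sphere). -/
/-!
Apply the inversion inequality with `λ = √|x|`: the Kelvin image `λ² x / |x|²` then lies on the
unit sphere, where `u ≥ C₀`, and the weight `(λ / |x|)^(n-α)` equals `|x|^(-(n-α)/2)`.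
-/

open Real

theorem norm_sq_div_norm_sq_smul {E : Type*} [NormedAddCommGroup E] [NormedSpace ℝ E]
    (lam : ℝ) (x : E) : ‖(lam ^ 2 / ‖x‖ ^ 2) • x‖ = lam ^ 2 / ‖x‖ := by
  rcases eq_or_ne x 0 with rfl | hx
  · simp
  have hx' : ‖x‖ ≠ 0 := norm_ne_zero_iff.mpr hx
  rw [norm_smul, norm_div, norm_pow, norm_pow, norm_norm, Real.norm_eq_abs, sq_abs]
  field_simp

theorem sqrt_div_self_rpow {r : ℝ} (hr : 0 ≤ r) (s : ℝ) : (√r / r) ^ s = r ^ (-s / 2) := by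
  rw [sqrt_div_self, inv_rpow (sqrt_nonneg r), sqrt_eq_rpow, ← rpow_mul hr, ← rpow_neg hr]
  ring_nf

theorem stmt_5_general (n : ℕ) (α : ℝ)
    (u : EuclideanSpace ℝ (Fin n) → ℝ)
    (hscal : ∀ lam : ℝ, 0 < lam → ∀ x : EuclideanSpace ℝ (Fin n), lam ≤ ‖x‖ →
      (lam / ‖x‖) ^ ((n : ℝ) - α) * u ((lam ^ 2 / ‖x‖ ^ 2) • x) ≤ u x)
    (C₀ : ℝ)
    (hC₀le : ∀ z : EuclideanSpace ℝ (Fin n), ‖z‖ = 1 → C₀ ≤ u z) :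
    ∀ x : EuclideanSpace ℝ (Fin n), 1 ≤ ‖x‖ →
      C₀ * ‖x‖ ^ (-((n : ℝ) - α) / 2) ≤ u x := by
  intro x hx
  have hx₀ : 0 < ‖x‖ := one_pos.trans_le hx
  have hsphere : ‖(√‖x‖ ^ 2 / ‖x‖ ^ 2) • x‖ = 1 := by
    rw [norm_sq_div_norm_sq_smul, sq_sqrt hx₀.le, div_self hx₀.ne']
  calc C₀ * ‖x‖ ^ (-((n : ℝ) - α) / 2)
      ≤ u ((√‖x‖ ^ 2 / ‖x‖ ^ 2) • x) * ‖x‖ ^ (-((n : ℝ) - α) / 2) := by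
        gcongr
        exact hC₀le _ hsphere
    _ = (√‖x‖ / ‖x‖) ^ ((n : ℝ) - α) * u ((√‖x‖ ^ 2 / ‖x‖ ^ 2) • x) := by
        rw [sqrt_div_self_rpow (norm_nonneg x), mul_comm]
    _ ≤ u x := hscal _ (sqrt_pos.mpr hx₀) x (sqrt_le_self_iff.mpr (Or.inr hx))

theorem stmt_5 (n : ℕ) (α : ℝ) (hα : 0 < α) (hαn : α < n)
    (u : EuclideanSpace ℝ (Fin n) → ℝ)
    (hpos : ∀ x : EuclideanSpace ℝ (Fin n), x ≠ 0 → 0 < u x)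
    (hscal : ∀ lam : ℝ, 0 < lam → ∀ x : EuclideanSpace ℝ (Fin n), lam ≤ ‖x‖ →
      (lam / ‖x‖) ^ ((n : ℝ) - α) * u ((lam ^ 2 / ‖x‖ ^ 2) • x) ≤ u x)
    (C₀ : ℝ) (hC₀ : 0 < C₀)
    (hC₀le : ∀ z : EuclideanSpace ℝ (Fin n), ‖z‖ = 1 → C₀ ≤ u z) :
    ∀ x : EuclideanSpace ℝ (Fin n), 1 ≤ ‖x‖ →
      C₀ * ‖x‖ ^ (-((n : ℝ) - α) / 2) ≤ u x :=
  stmt_5_general n α u hscal C₀ hC₀le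
end

section
/- Let n ≥ 3, p > 1, and let Ω ⊂ ℝⁿ be a bounded open set. Suppose u ∈ C²(Ω) ∩ C(Ω̄) is positive in Ω, vanishes on ∂Ω, and satisfies -Δu = u^p in Ω. Then max_{Ω̄} u ≥ (2n / (diam Ω)²)^{1/(p-1)}, i.e., ‖u‖_∞ ≥ (√(2n)/diam Ω)^{2/(p-1)}. -/
/-!
The maximum `M = u x₀` over `closure Ω` is attained inside `Ω`, since `u > 0` there and `u = 0`
on the frontier. For `c > M ^ p / (2n)` the function `v = u + c ‖· - x₀‖²` has
`Δv = 2nc - u ^ p > 0` in `Ω`; as the Laplacian is nonpositive at an interior maximum, `v` is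
maximal over `closure Ω` at a frontier point `y`, so `M = v x₀ ≤ v y ≤ c (diam Ω)²`.
Letting `c` decrease to `M ^ p / (2n)` gives `2n ≤ M ^ (p - 1) (diam Ω)²`.
-/

/-- The Laplacian as a sum of second partial derivatives along the standard
coordinate directions of Euclidean space. -/
noncomputable def lap {n : ℕ} (f : EuclideanSpace ℝ (Fin n) → ℝ)
    (x : EuclideanSpace ℝ (Fin n)) : ℝ :=
  ∑ i : Fin n, fderiv ℝ (fun y => fderiv ℝ f y (EuclideanSpace.single i 1)) x
    (EuclideanSpace.single i 1)

open Set Filter Topology InnerProductSpace Laplacian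
open scoped RealInnerProductSpace

theorem IsLocalMax.deriv_deriv_nonpos {g : ℝ → ℝ} {t : ℝ} (h : IsLocalMax g t)
    (hg : ContinuousAt g t) : deriv (deriv g) t ≤ 0 := by
  by_contra! hpos
  -- A positive second derivative would make `t` a local minimum too, so `g` is locally constant.
  have hconst : g =ᶠ[𝓝 t] fun _ => g t :=
    ((isLocalMin_of_deriv_deriv_pos hpos h.deriv_eq_zero hg).and h).mono
      fun s hs => le_antisymm hs.2 hs.1
  have := hconst.deriv.deriv_eq
  simp_all

theorem IsLocalMax.iteratedFDeriv_two_nonpos {E : Type*} [NormedAddCommGroup E]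
    [NormedSpace ℝ E] {f : E → ℝ} {x : E} (h : IsLocalMax f x) (hf : ContDiffAt ℝ 2 f x)
    (e : E) : iteratedFDeriv ℝ 2 f x ![e, e] ≤ 0 := by
  set γ : ℝ → E := fun s => x + s • e
  have hγ : ∀ t, HasDerivAt γ e t := fun t => by
    simpa [γ] using ((hasDerivAt_id t).smul_const e).const_add x
  have hγ0 : γ 0 = x := by simp [γ]
  have hf_near : ∀ᶠ t in 𝓝 (0 : ℝ), DifferentiableAt ℝ f (γ t) := by
    refine (hγ 0).continuousAt.tendsto.eventually ?_
    rw [hγ0]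
    exact (hf.eventually (by simp)).mono fun y hy => hy.differentiableAt (by simp)
  have hderiv : deriv (f ∘ γ) =ᶠ[𝓝 0] fun t => fderiv ℝ f (γ t) e :=
    hf_near.mono fun t ht => (ht.hasFDerivAt.comp_hasDerivAt t (hγ t)).deriv
  have hf2 : HasFDerivAt (fderiv ℝ f) (fderiv ℝ (fderiv ℝ f) x) (γ 0) := by
    rw [hγ0]
    exact ((hf.fderiv_right (m := 1) (by norm_num)).differentiableAt (by simp)).hasFDerivAt
  have hsecond :
      HasDerivAt (fun t => fderiv ℝ f (γ t) e) (fderiv ℝ (fderiv ℝ f) x e e) 0 :=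
    (ContinuousLinearMap.apply ℝ ℝ e).hasFDerivAt.comp_hasDerivAt 0
      (hf2.comp_hasDerivAt 0 (hγ 0))
  have hmax : IsLocalMax (f ∘ γ) 0 := (hγ0 ▸ h).comp_continuous (hγ 0).continuousAt
  rw [iteratedFDeriv_two_apply, Matrix.cons_val_zero, Matrix.cons_val_one, Matrix.cons_val_zero,
    ← hsecond.deriv, ← hderiv.deriv_eq]
  exact hmax.deriv_deriv_nonpos (hf.continuousAt.comp_of_eq (hγ 0).continuousAt hγ0)

section InnerProductSpace

variable {E : Type*} [NormedAddCommGroup E] [InnerProductSpace ℝ E] [FiniteDimensional ℝ E]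

theorem IsLocalMax.laplacian_nonpos {f : E → ℝ} {x : E} (h : IsLocalMax f x)
    (hf : ContDiffAt ℝ 2 f x) : Δ f x ≤ 0 := by
  rw [laplacian_eq_iteratedFDeriv_stdOrthonormalBasis]
  exact Finset.sum_nonpos fun i _ => h.iteratedFDeriv_two_nonpos hf _

theorem laplacian_norm_sub_sq (x₀ x : E) :
    Δ (fun z => ‖z - x₀‖ ^ 2) x = 2 * Module.finrank ℝ E := by
  have hfirst : fderiv ℝ (fun z => ‖z - x₀‖ ^ 2) = fun z => 2 • innerSL ℝ (z - x₀) := by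
    ext z : 1
    simpa using ((hasFDerivAt_id z).sub_const x₀).norm_sq.fderiv
  have hsecond : fderiv ℝ (fun z : E => 2 • innerSL ℝ (z - x₀)) x = 2 • innerSL ℝ := by
    have : HasFDerivAt (fun z : E => (2 • innerSL ℝ) z - 2 • innerSL ℝ x₀) (2 • innerSL ℝ) x :=
      (2 • innerSL ℝ).hasFDerivAt.sub_const _
    simpa [smul_sub] using this.fderiv
  rw [laplacian_eq_iteratedFDeriv_stdOrthonormalBasis]
  simp only [iteratedFDeriv_two_apply, Matrix.cons_val_zero, Matrix.cons_val_one, hfirst,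
    hsecond]
  -- `show` identifies two defeq `NormedSpace ℝ ℝ` instances that block `innerSL_apply_apply`.
  show ∑ i, 2 • ⟪stdOrthonormalBasis ℝ E i, stdOrthonormalBasis ℝ E i⟫ = _
  simp [mul_comm]

theorem exists_mem_frontier_isMaxOn_of_laplacian_pos {Ω : Set E} {v : E → ℝ}
    (hΩo : IsOpen Ω) (hΩb : Bornology.IsBounded Ω) (hne : (closure Ω).Nonempty)
    (hv : ContDiffOn ℝ 2 v Ω) (hvc : ContinuousOn v (closure Ω)) (hΔ : ∀ x ∈ Ω, 0 < Δ v x) :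
    ∃ y ∈ frontier Ω, IsMaxOn v (closure Ω) y := by
  obtain ⟨y, hy, hmax⟩ := hΩb.isCompact_closure.exists_isMaxOn hne hvc
  refine ⟨y, hΩo.frontier_eq ▸ ⟨hy, fun hyΩ => ?_⟩, hmax⟩
  have hloc : IsLocalMax v y := (hmax.on_subset subset_closure).isLocalMax (hΩo.mem_nhds hyΩ)
  exact (hΔ y hyΩ).not_ge (hloc.laplacian_nonpos (hv.contDiffAt (hΩo.mem_nhds hyΩ)))

theorem le_mul_diam_sq_of_laplacian_add_pos {Ω : Set E} {u : E → ℝ} {c : ℝ} {x₀ : E}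
    (hΩo : IsOpen Ω) (hΩb : Bornology.IsBounded Ω) (hu : ContDiffOn ℝ 2 u Ω)
    (huc : ContinuousOn u (closure Ω)) (hc : 0 ≤ c) (hx₀ : x₀ ∈ closure Ω)
    (hfrontier : ∀ y ∈ frontier Ω, u y ≤ 0)
    (hΔ : ∀ x ∈ Ω, 0 < Δ u x + 2 * Module.finrank ℝ E * c) :
    u x₀ ≤ c * Metric.diam Ω ^ 2 := by
  set q : E → ℝ := fun z => ‖z - x₀‖ ^ 2
  have hq : ContDiff ℝ 2 q := (contDiff_id.sub contDiff_const).norm_sq ℝ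
  have hΔv : ∀ x ∈ Ω, 0 < Δ (u + c • q) x := fun x hx => by
    have hcq : ContDiffAt ℝ 2 (c • q) x := hq.contDiffAt.const_smul c
    rw [(hu.contDiffAt (hΩo.mem_nhds hx)).laplacian_add hcq, laplacian_smul c hq.contDiffAt]
    simpa [q, laplacian_norm_sub_sq, mul_comm] using hΔ x hx
  obtain ⟨y, hy, hmax⟩ := exists_mem_frontier_isMaxOn_of_laplacian_pos hΩo hΩb ⟨x₀, hx₀⟩
    (hu.add (hq.contDiffOn.const_smul c)) (huc.add (hq.continuous.continuousOn.const_smul c)) hΔv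
  have hdist : ‖y - x₀‖ ≤ Metric.diam Ω := by
    rw [← dist_eq_norm, ← Metric.diam_closure]
    exact Metric.dist_le_diam_of_mem hΩb.closure (frontier_subset_closure hy) hx₀
  calc u x₀ = (u + c • q) x₀ := by simp [q]
    _ ≤ (u + c • q) y := hmax hx₀
    _ = u y + c * ‖y - x₀‖ ^ 2 := rfl
    _ ≤ 0 + c * Metric.diam Ω ^ 2 := by gcongr; exact hfrontier y hy
    _ = c * Metric.diam Ω ^ 2 := zero_add _

end InnerProductSpace

theorem lap_eq_laplacian {n : ℕ} {f : EuclideanSpace ℝ (Fin n) → ℝ}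
    {x : EuclideanSpace ℝ (Fin n)} (hf : ContDiffAt ℝ 2 f x) : lap f x = Δ f x := by
  have hf2 : DifferentiableAt ℝ (fderiv ℝ f) x :=
    (hf.fderiv_right (m := 1) (by norm_num)).differentiableAt (by simp)
  rw [laplacian_eq_iteratedFDeriv_orthonormalBasis f (EuclideanSpace.basisFun (Fin n) ℝ)]
  refine Finset.sum_congr rfl fun i _ => ?_
  rw [iteratedFDeriv_two_apply, fderiv_clm_apply hf2 (differentiableAt_const _)]
  simp

theorem Real.sqrt_div_rpow_two_div_sub_one_le {M N d p : ℝ} (hM : 0 < M) (hN : 0 < N)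
    (hd : 0 ≤ d) (hp : 1 < p) (h : M ≤ M ^ p / N * d ^ 2) : (√N / d) ^ (2 / (p - 1)) ≤ M := by
  rw [div_eq_mul_inv 2, Real.rpow_mul (by positivity), Real.rpow_two,
    Real.rpow_inv_le_iff_of_pos (by positivity) hM.le (by linarith), div_pow, Real.sq_sqrt hN.le,
    Real.rpow_sub_one hM.ne']
  refine div_le_of_le_mul₀ (by positivity) (by positivity) ?_
  rw [div_mul_eq_mul_div, le_div_iff₀ hM]
  rw [div_mul_eq_mul_div, le_div_iff₀ hN] at h
  linarith

theorem stmt_16 (n : ℕ) (hn : 3 ≤ n) (p : ℝ) (hp : 1 < p)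
    (Ω : Set (EuclideanSpace ℝ (Fin n)))
    (hΩo : IsOpen Ω) (hΩb : Bornology.IsBounded Ω) (hΩne : Ω.Nonempty)
    (u : EuclideanSpace ℝ (Fin n) → ℝ)
    (hu2 : ContDiffOn ℝ 2 u Ω) (huc : ContinuousOn u (closure Ω))
    (hupos : ∀ x ∈ Ω, 0 < u x) (hubd : ∀ x ∈ frontier Ω, u x = 0)
    (heq : ∀ x ∈ Ω, -lap u x = u x ^ p) :
    (Real.sqrt (2 * n) / Metric.diam Ω) ^ (2 / (p - 1)) ≤
      sSup (u '' closure Ω) := by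
  obtain ⟨x₀, hx₀, hmax⟩ := hΩb.isCompact_closure.exists_isMaxOn hΩne.closure huc
  set M := u x₀
  set d := Metric.diam Ω
  have hx₀Ω : x₀ ∈ Ω := by
    by_contra hx₀Ω
    obtain ⟨z, hz⟩ := hΩne
    have hzM : u z ≤ M := hmax (subset_closure hz)
    linarith [hupos z hz, hubd x₀ (hΩo.frontier_eq ▸ ⟨hx₀, hx₀Ω⟩)]
  have hM : 0 < M := hupos x₀ hx₀Ω
  have hn0 : (0 : ℝ) < n := by exact_mod_cast (by omega : 0 < n)
  have hbound : ∀ c > M ^ p / (2 * n), M ≤ c * d ^ 2 := fun c hc => by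
    have hc0 : 0 ≤ c := le_trans (by positivity) hc.le
    rw [gt_iff_lt, div_lt_iff₀ (by positivity)] at hc
    refine le_mul_diam_sq_of_laplacian_add_pos hΩo hΩb hu2 huc hc0 hx₀
      (fun y hy => (hubd y hy).le) fun x hx => ?_
    have hupM : u x ^ p ≤ M ^ p :=
      Real.rpow_le_rpow (hupos x hx).le (hmax (subset_closure hx)) (by linarith)
    rw [finrank_euclideanSpace_fin, ← lap_eq_laplacian (hu2.contDiffAt (hΩo.mem_nhds hx))]
    linarith [heq x hx]
  have hlimit : M ≤ M ^ p / (2 * n) * d ^ 2 :=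
    ge_of_tendsto (x := 𝓝[>] (M ^ p / (2 * n)))
      (((continuous_mul_const (d ^ 2)).tendsto _).mono_left nhdsWithin_le_nhds)
      (eventually_nhdsWithin_of_forall hbound)
  have hsup : sSup (u '' closure Ω) = M :=
    IsGreatest.csSup_eq ⟨mem_image_of_mem u hx₀, forall_mem_image.2 hmax⟩
  rw [hsup]
  exact Real.sqrt_div_rpow_two_div_sub_one_le hM (by positivity) Metric.diam_nonneg hp hlimit
end

section
/- Let n > α > 0, λ > 0, a > -α, and p > 0 with τ := n + α + 2a - p(n-α) ≠ 0. Suppose u : ℝⁿ \ {0} → (0,∞) satisfies u(x) = C ∫_{ℝⁿ} |y|^a u(y)^p |x-y|^{α-n} dy for all x ≠ 0 (C > 0, all integrals finite), and let u_λ(x) = (λ/|x|)^{n-α} u(λ²x/|x|²). Then u_λ satisfies u_λ(x) = C ∫_{ℝⁿ} (λ/|y|)^τ |y|^a u_λ(y)^p |x-y|^{α-n} dy for all x ≠ 0. -/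
open MeasureTheory Module

namespace EuclideanGeometry

variable {E : Type*} [NormedAddCommGroup E] [InnerProductSpace ℝ E]

theorem inversion_zero_apply (R : ℝ) (x : E) : inversion 0 R x = (R ^ 2 / ‖x‖ ^ 2) • x := by
  simp [inversion, div_pow]

theorem abs_det_fderiv_inversion [FiniteDimensional ℝ E] (c x : E) (R : ℝ) :
    |((R / dist x c) ^ 2 • ((ℝ ∙ (x - c))ᗮ.reflection : E →L[ℝ] E)).det|
      = (R / dist x c) ^ (2 * finrank ℝ E) := by
  have hdet : LinearMap.det ((ℝ ∙ (x - c))ᗮ.reflection : E →L[ℝ] E).toLinearMap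
      = (-1) ^ finrank ℝ (ℝ ∙ (x - c))ᗮᗮ :=
    Submodule.det_reflection _
  rw [ContinuousLinearMap.det, ContinuousLinearMap.toLinearMap_smul, LinearMap.det_smul, hdet,
    abs_mul, abs_neg_one_pow, mul_one, abs_of_nonneg (by positivity), pow_mul]

theorem norm_inversion_zero (R : ℝ) (x : E) : ‖inversion 0 R x‖ = R ^ 2 / ‖x‖ := by
  simpa only [dist_zero_right] using dist_inversion_center 0 x R

theorem norm_inversion_zero_sub_inversion_zero {x y : E} (hx : x ≠ 0) (hy : y ≠ 0) (R : ℝ) :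
    ‖inversion 0 R x - inversion 0 R y‖ = R ^ 2 / (‖x‖ * ‖y‖) * ‖x - y‖ := by
  simpa only [dist_eq_norm, sub_zero] using dist_inversion_inversion hx hy R

theorem integral_comp_inversion {F : Type*} [NormedAddCommGroup F] [NormedSpace ℝ F]
    [FiniteDimensional ℝ E] [MeasurableSpace E] [BorelSpace E] [Nontrivial E]
    (μ : Measure E) [μ.IsAddHaarMeasure] (c : E) {R : ℝ} (hR : R ≠ 0) (g : E → F) :
    ∫ x, (R / dist x c) ^ (2 * finrank ℝ E) • g (inversion c R x) ∂μ = ∫ y, g y ∂μ := by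
  have himage : inversion c R '' {c}ᶜ = {c}ᶜ := by
    ext x
    simp [(inversion_involutive c hR).image_eq_preimage_symm, inversion_eq_center hR]
  have hchange := integral_image_eq_integral_abs_det_fderiv_smul μ
    (measurableSet_singleton c).compl (fun x hx => (hasFDerivAt_inversion hx).hasFDerivWithinAt)
    (inversion_injective c hR).injOn g
  simp only [abs_det_fderiv_inversion, himage, restrict_compl_singleton] at hchange
  exact hchange.symm

end EuclideanGeometry

/-- The weights produced by `y ↦ λ²y/|y|²` in the integral equation: `|y^λ| = λ²/|y|`,
`|x^λ - y^λ| = λ²|x - y|/(|x||y|)` and the Jacobian `(λ/|y|)^(2n)`. -/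
theorem kelvin_weight_identity (k : ℕ) {L X Z U W d a p τ : ℝ} (hL : 0 < L) (hX : 0 < X)
    (hZ : 0 < Z) (hU : 0 < U) (hW : 0 ≤ W) (hτ : τ = 2 * k - d + 2 * a - p * d) :
    (L / X) ^ d * ((L / Z) ^ (2 * k) * ((L ^ 2 / Z) ^ a * U ^ p / (L ^ 2 / (X * Z) * W) ^ d))
      = (L / Z) ^ τ * Z ^ a * ((L / Z) ^ d * U) ^ p / W ^ d := by
  have hweight : (L / X) ^ d * (L / Z) ^ (2 * k) * (L ^ 2 / Z) ^ a / (L ^ 2 / (X * Z)) ^ d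
      = (L / Z) ^ τ * Z ^ a * ((L / Z) ^ d) ^ p := by
    rw [← Real.exp_log (by positivity :
        0 < (L / X) ^ d * (L / Z) ^ (2 * k) * (L ^ 2 / Z) ^ a / (L ^ 2 / (X * Z)) ^ d),
      ← Real.exp_log (by positivity : 0 < (L / Z) ^ τ * Z ^ a * ((L / Z) ^ d) ^ p)]
    congr 1
    simp (disch := positivity) only [Real.log_div, Real.log_mul, Real.log_rpow, Real.log_pow]
    rw [hτ]
    push_cast
    ring
  rw [Real.mul_rpow (by positivity) hW, Real.mul_rpow (by positivity) hU.le]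
  linear_combination (U ^ p / W ^ d) * hweight

open EuclideanGeometry in
theorem stmt_19_general (n : ℕ) (α lam a p C τ : ℝ)
    (hlam : 0 < lam)
    (hτ : τ = (n : ℝ) + α + 2 * a - p * ((n : ℝ) - α))
    (u : EuclideanSpace ℝ (Fin n) → ℝ)
    (hpos : ∀ x : EuclideanSpace ℝ (Fin n), x ≠ 0 → 0 < u x)
    (hIE : ∀ x : EuclideanSpace ℝ (Fin n), x ≠ 0 →
      u x = C * ∫ y : EuclideanSpace ℝ (Fin n),
        ‖y‖ ^ a * u y ^ p / ‖x - y‖ ^ ((n : ℝ) - α))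
    (ulam : EuclideanSpace ℝ (Fin n) → ℝ)
    (hulam : ∀ x : EuclideanSpace ℝ (Fin n),
      ulam x = (lam / ‖x‖) ^ ((n : ℝ) - α) * u ((lam ^ 2 / ‖x‖ ^ 2) • x)) :
    ∀ x : EuclideanSpace ℝ (Fin n), x ≠ 0 →
      ulam x = C * ∫ y : EuclideanSpace ℝ (Fin n),
        (lam / ‖y‖) ^ τ * ‖y‖ ^ a * ulam y ^ p / ‖x - y‖ ^ ((n : ℝ) - α) := by
  intro x hx
  have : Nontrivial (EuclideanSpace ℝ (Fin n)) := nontrivial_of_ne x 0 hx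
  have hinv_ne : ∀ z : EuclideanSpace ℝ (Fin n), z ≠ 0 → inversion 0 lam z ≠ 0 :=
    fun z hz => (inversion_eq_center hlam.ne').not.mpr hz
  simp only [← inversion_zero_apply] at hulam
  rw [hulam x, hIE _ (hinv_ne x hx), ← integral_comp_inversion volume 0 hlam.ne',
    mul_left_comm, ← integral_const_mul]
  congr 1
  refine integral_congr_ae ((Measure.ae_ne volume 0).mono fun z hz => ?_)
  beta_reduce
  rw [hulam z, smul_eq_mul, dist_zero_right, finrank_euclideanSpace_fin, norm_inversion_zero,
    norm_inversion_zero_sub_inversion_zero hx hz]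
  exact kelvin_weight_identity n hlam (norm_pos_iff.2 hx) (norm_pos_iff.2 hz)
    (hpos _ (hinv_ne z hz)) (norm_nonneg _) (by rw [hτ]; ring)

theorem stmt_19 (n : ℕ) (α lam a p C τ : ℝ) (hα : 0 < α) (hαn : α < n)
    (hlam : 0 < lam) (ha : -α < a) (hp : 0 < p) (hC : 0 < C)
    (hτ : τ = (n : ℝ) + α + 2 * a - p * ((n : ℝ) - α)) (hτ0 : τ ≠ 0)
    (u : EuclideanSpace ℝ (Fin n) → ℝ)
    (hpos : ∀ x : EuclideanSpace ℝ (Fin n), x ≠ 0 → 0 < u x)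
    (hint : ∀ x : EuclideanSpace ℝ (Fin n), x ≠ 0 →
      Integrable (fun y : EuclideanSpace ℝ (Fin n) =>
        ‖y‖ ^ a * u y ^ p / ‖x - y‖ ^ ((n : ℝ) - α)))
    (hIE : ∀ x : EuclideanSpace ℝ (Fin n), x ≠ 0 →
      u x = C * ∫ y : EuclideanSpace ℝ (Fin n),
        ‖y‖ ^ a * u y ^ p / ‖x - y‖ ^ ((n : ℝ) - α))
    (ulam : EuclideanSpace ℝ (Fin n) → ℝ)
    (hulam : ∀ x : EuclideanSpace ℝ (Fin n),
      ulam x = (lam / ‖x‖) ^ ((n : ℝ) - α) * u ((lam ^ 2 / ‖x‖ ^ 2) • x)) :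
    ∀ x : EuclideanSpace ℝ (Fin n), x ≠ 0 →
      ulam x = C * ∫ y : EuclideanSpace ℝ (Fin n),
        (lam / ‖y‖) ^ τ * ‖y‖ ^ a * ulam y ^ p / ‖x - y‖ ^ ((n : ℝ) - α) :=
  stmt_19_general n α lam a p C τ hlam hτ u hpos hIE ulam hulam
end
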